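/- arXiv:math/0702377 — 2 statements merged into one kernel-verified Lean document; each statement's English description precedes it below -/
import Mathlib

section
/- Let F be a holomorphic self-mapping of the open unit disk Δ belonging to the class C_A^3(1), with angular boundary values F(1) = 1, F'(1) = 1, F''(1) = 0 and F'''(1) = 0. Then F is the identity mapping, i.e. F(z) = z for all z ∈ Δ. -/
open Complex Filter Set Metric ComplexConjugate

noncomputable section

/-- The open unit disk in ℂ. -/
def unitDisk : Set ℂ := {z : ℂ | ‖z‖ < 1}

/-- Stolz angle (nontangential approach region) with vertex `ζ` and aperture `k`. -/
def stolzAngle (ζ : ℂ) (k : ℝ) : Set ℂ :=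
  {z : ℂ | z ∈ unitDisk ∧ ‖z - ζ‖ < k * (1 - ‖z‖)}

/-- Angular (nontangential) limit of `g` at the boundary point `ζ` equals `L`:
the limit of `g` within every Stolz angle with vertex `ζ`. -/
def AngularLimAt (g : ℂ → ℂ) (ζ L : ℂ) : Prop :=
  ∀ k : ℝ, 1 < k → Filter.Tendsto g (nhdsWithin ζ (stolzAngle ζ k)) (nhds L)

/-- `g` belongs to `C_A^3(1)` with angular boundary values `a0 = g(1)`, `a1 = g'(1)`,
`a2 = g''(1)`, `a3 = g'''(1)`: the remainder of the third order Taylor expansion at `1`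
is `o((z-1)^3)` angularly. -/
def CA3At1 (g : ℂ → ℂ) (a0 a1 a2 a3 : ℂ) : Prop :=
  AngularLimAt (fun z =>
    (g z - (a0 + a1 * (z - 1) + a2 / 2 * (z - 1) ^ 2 + a3 / 6 * (z - 1) ^ 3)) / (z - 1) ^ 3) 1 0

/-- Holomorphic self-mapping of the unit disk. -/
def HolSelfMap (F : ℂ → ℂ) : Prop :=
  DifferentiableOn ℂ F unitDisk ∧ Set.MapsTo F unitDisk unitDisk

/-- `F` is a linear fractional transformation on the unit disk. -/
def IsLFTOn (F : ℂ → ℂ) : Prop :=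
  ∃ a b c d : ℂ, a * d - b * c ≠ 0 ∧ ∀ z ∈ unitDisk, F z = (a * z + b) / (c * z + d)

/-- `F` is a (holomorphic) automorphism of the unit disk. -/
def IsAutomorphismOfDisk (F : ℂ → ℂ) : Prop :=
  HolSelfMap F ∧ ∃ G : ℂ → ℂ, HolSelfMap G ∧
    (∀ z ∈ unitDisk, G (F z) = z) ∧ (∀ z ∈ unitDisk, F (G z) = z)

/-- The horocycle `D(1,k)` internally tangent to the unit circle at 1. -/
def horocycle (k : ℝ) : Set ℂ :=
  {z : ℂ | z ∈ unitDisk ∧ ‖1 - z‖ ^ 2 / (1 - ‖z‖ ^ 2) < k}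

/-- `τ` is the Denjoy–Wolff point of `F`: the iterates converge pointwise to `τ`. -/
def IsDenjoyWolffPt (F : ℂ → ℂ) (τ : ℂ) : Prop :=
  ∀ z ∈ unitDisk, Filter.Tendsto (fun n : ℕ => F^[n] z) Filter.atTop (nhds τ)

/-- A one-parameter continuous semigroup of holomorphic self-mappings of the disk. -/
def IsSemigroupOnDisk (S : ℝ → ℂ → ℂ) : Prop :=
  (∀ t : ℝ, 0 ≤ t → HolSelfMap (S t)) ∧
  (∀ t : ℝ, 0 ≤ t → ∀ s : ℝ, 0 ≤ s → ∀ z ∈ unitDisk, S (t + s) z = S t (S s z)) ∧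
  (∀ z ∈ unitDisk, Filter.Tendsto (fun t : ℝ => S t z) (nhdsWithin 0 (Set.Ioi 0)) (nhds z))

/-- `f` is the infinitesimal generator of the semigroup `S`. -/
def Generates (f : ℂ → ℂ) (S : ℝ → ℂ → ℂ) : Prop :=
  IsSemigroupOnDisk S ∧
  ∀ z ∈ unitDisk,
    Filter.Tendsto (fun t : ℝ => (z - S t z) / (t : ℂ)) (nhdsWithin 0 (Set.Ioi 0)) (nhds (f z))

/-- `f` belongs to the class `G(Δ)` of infinitesimal generators on the disk. -/
def IsGenerator (f : ℂ → ℂ) : Prop :=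
  DifferentiableOn ℂ f unitDisk ∧ ∃ S : ℝ → ℂ → ℂ, Generates f S

/-- `f` generates a one-parameter group of automorphisms of the disk
(equivalently, both `f` and `-f` are generators). -/
def GeneratesGroupOfAutomorphisms (f : ℂ → ℂ) : Prop :=
  IsGenerator f ∧ IsGenerator (fun z => -f z)

/-- Hyperbolic automorphism of the disk: an automorphism with boundary Denjoy–Wolff point `τ`
and angular derivative `0 < F'(τ) < 1`. -/
def IsHyperbolicAut (F : ℂ → ℂ) : Prop :=
  IsAutomorphismOfDisk F ∧ ∃ τ : ℂ, ‖τ‖ = 1 ∧ IsDenjoyWolffPt F τ ∧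
    ∃ α : ℝ, 0 < α ∧ α < 1 ∧ AngularLimAt (fun z => (F z - τ) / (z - τ)) τ (α : ℂ)

/-- Parabolic automorphism of the disk: an automorphism with boundary Denjoy–Wolff point `τ`
and angular derivative `F'(τ) = 1`. -/
def IsParabolicAut (F : ℂ → ℂ) : Prop :=
  IsAutomorphismOfDisk F ∧ ∃ τ : ℂ, ‖τ‖ = 1 ∧ IsDenjoyWolffPt F τ ∧
    AngularLimAt (fun z => (F z - τ) / (z - τ)) τ 1

/-! Conjugating by the Cayley transform turns `F` into a holomorphic self-map `G` of the right
half-plane with `t * (G t - t) → 0` as `t → +∞` along the reals; this is where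
`F z - z = o((z - 1) ^ 3)` enters. Julia's lemma then gives `Re w ≤ Re (G w)`, so `H = G - id`
maps the half-plane into its closure. By the open mapping theorem `H` is either constant, hence
`0`, or maps into the open half-plane; in the latter case Schwarz–Pick applied to `1 / H` gives
`‖H 1‖ ≤ t * ‖H t‖`, contradicting `t * H t → 0`. -/

open Topology

def rightHalfPlane : Set ℂ := {w : ℂ | 0 < w.re}

lemma isOpen_rightHalfPlane : IsOpen rightHalfPlane :=
  isOpen_lt continuous_const continuous_re

lemma isPreconnected_rightHalfPlane : IsPreconnected rightHalfPlane :=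
  (convex_halfSpace_re_gt 0).isPreconnected

lemma ofReal_mem_rightHalfPlane {t : ℝ} (ht : 0 < t) : (t : ℂ) ∈ rightHalfPlane := by
  simpa [rightHalfPlane] using ht

lemma one_mem_rightHalfPlane : (1 : ℂ) ∈ rightHalfPlane := by
  simpa using ofReal_mem_rightHalfPlane one_pos

lemma add_conj_ne_zero {w a : ℂ} (hw : w ∈ rightHalfPlane) (ha : a ∈ rightHalfPlane) :
    w + conj a ≠ 0 := by
  intro h
  have := congrArg re h
  simp only [add_re, conj_re, zero_re] at this
  linarith [show 0 < w.re from hw, show 0 < a.re from ha]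

lemma one_sub_ne_zero_of_mem_unitDisk {z : ℂ} (hz : z ∈ unitDisk) : 1 - z ≠ 0 := by
  rintro h
  rw [← eq_of_sub_eq_zero h] at hz
  simp [unitDisk] at hz

/-- The Möbius map of the unit disk onto the right half-plane sending `0` to `a`, with inverse
`cayleyInv a`; `cayley 1` is the classical Cayley transform `(1 + z) / (1 - z)`. -/
def cayley (a z : ℂ) : ℂ := (a + conj a * z) / (1 - z)

def cayleyInv (a w : ℂ) : ℂ := (w - a) / (w + conj a)

lemma cayley_zero (a : ℂ) : cayley a 0 = a := by simp [cayley]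

lemma cayleyInv_self (a : ℂ) : cayleyInv a a = 0 := by simp [cayleyInv]

lemma re_cayley (a z : ℂ) : (cayley a z).re = a.re * (1 - normSq z) / normSq (1 - z) := by
  rw [cayley, div_re, ← add_div]
  congr 1
  simp only [normSq_apply, add_re, add_im, mul_re, mul_im, conj_re, conj_im, sub_re, sub_im,
    one_re, one_im]
  ring

lemma cayley_mem_rightHalfPlane {a z : ℂ} (ha : a ∈ rightHalfPlane) (hz : z ∈ unitDisk) :
    cayley a z ∈ rightHalfPlane := by
  have hz' : normSq z < 1 := by
    rw [← Complex.sq_norm]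
    exact pow_lt_one₀ (norm_nonneg z) hz two_ne_zero
  show 0 < (cayley a z).re
  rw [re_cayley]
  exact div_pos (mul_pos ha (by linarith)) (normSq_pos.2 (one_sub_ne_zero_of_mem_unitDisk hz))

lemma normSq_add_conj_sub_normSq_sub (w a : ℂ) :
    normSq (w + conj a) - normSq (w - a) = 4 * w.re * a.re := by
  simp only [normSq_apply, add_re, add_im, sub_re, sub_im, conj_re, conj_im]
  ring

lemma one_sub_sq_norm_cayleyInv {a w : ℂ} (ha : a ∈ rightHalfPlane)
    (hw : w ∈ rightHalfPlane) :
    1 - ‖cayleyInv a w‖ ^ 2 = 4 * w.re * a.re / normSq (w + conj a) := by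
  have hne : normSq (w + conj a) ≠ 0 := normSq_eq_zero.not.2 (add_conj_ne_zero hw ha)
  rw [cayleyInv, norm_div, div_pow, Complex.sq_norm, Complex.sq_norm,
    ← normSq_add_conj_sub_normSq_sub]
  field_simp

lemma cayleyInv_mem_unitDisk {a w : ℂ} (ha : a ∈ rightHalfPlane) (hw : w ∈ rightHalfPlane) :
    cayleyInv a w ∈ unitDisk := by
  have hw' : 0 < w.re := hw
  have ha' : 0 < a.re := ha
  have hpos : 0 < 1 - ‖cayleyInv a w‖ ^ 2 := by
    rw [one_sub_sq_norm_cayleyInv ha hw]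
    exact div_pos (by positivity) (normSq_pos.2 (add_conj_ne_zero hw ha))
  show ‖cayleyInv a w‖ < 1
  nlinarith [norm_nonneg (cayleyInv a w)]

lemma cayley_cayleyInv {a w : ℂ} (ha : a ∈ rightHalfPlane) (hw : w ∈ rightHalfPlane) :
    cayley a (cayleyInv a w) = w := by
  have h₁ := add_conj_ne_zero hw ha
  have h₂ := add_conj_ne_zero ha ha
  have hnum : a + conj a * cayleyInv a w = w * (a + conj a) / (w + conj a) := by
    rw [cayleyInv]; field_simp; ring
  have hden : 1 - cayleyInv a w = (a + conj a) / (w + conj a) := by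
    rw [cayleyInv]; field_simp; ring
  rw [cayley, hnum, hden, div_div_div_cancel_right₀ h₁, mul_div_cancel_right₀ _ h₂]

lemma cayleyInv_cayley {a z : ℂ} (ha : a ∈ rightHalfPlane) (hz : z ∈ unitDisk) :
    cayleyInv a (cayley a z) = z := by
  have h₁ := one_sub_ne_zero_of_mem_unitDisk hz
  have h₂ := add_conj_ne_zero ha ha
  have hnum : cayley a z - a = z * (a + conj a) / (1 - z) := by
    rw [cayley]; field_simp; ring
  have hden : cayley a z + conj a = (a + conj a) / (1 - z) := by
    rw [cayley]; field_simp; ring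
  rw [cayleyInv, hnum, hden, div_div_div_cancel_right₀ h₁, mul_div_cancel_right₀ _ h₂]

lemma differentiableOn_cayley (a : ℂ) : DifferentiableOn ℂ (cayley a) unitDisk :=
  ((differentiableOn_const a).add ((differentiableOn_const _).mul differentiableOn_id)).div
    ((differentiableOn_const 1).sub differentiableOn_id) fun _ hz =>
      one_sub_ne_zero_of_mem_unitDisk hz

lemma differentiableOn_cayleyInv {a : ℂ} (ha : a ∈ rightHalfPlane) :
    DifferentiableOn ℂ (cayleyInv a) rightHalfPlane :=
  (differentiableOn_id.sub (differentiableOn_const a)).div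
    (differentiableOn_id.add (differentiableOn_const _)) fun _ hw => add_conj_ne_zero hw ha

lemma tendsto_ofReal_inv_atTop : Tendsto (fun t : ℝ => (t : ℂ)⁻¹) atTop (𝓝 0) := by
  simpa [Function.comp_def] using (continuous_ofReal.tendsto 0).comp tendsto_inv_atTop_zero

lemma cayleyInv_one_ofReal (t : ℝ) : cayleyInv 1 t = ((t - 1) / (t + 1) : ℝ) := by
  simp [cayleyInv]

section SelfMapsOfRightHalfPlane

variable {G : ℂ → ℂ}

/-- Schwarz–Pick lemma for the pseudo-hyperbolic distance `‖cayleyInv v w‖` of the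
right half-plane. -/
theorem norm_cayleyInv_le (hd : DifferentiableOn ℂ G rightHalfPlane)
    (hm : MapsTo G rightHalfPlane rightHalfPlane) {v w : ℂ} (hv : v ∈ rightHalfPlane)
    (hw : w ∈ rightHalfPlane) :
    ‖cayleyInv (G v) (G w)‖ ≤ ‖cayleyInv v w‖ := by
  have hGv := hm hv
  set f := fun z => cayleyInv (G v) (G (cayley v z))
  have hmaps : MapsTo (cayley v) (ball 0 1) rightHalfPlane := fun z hz =>
    cayley_mem_rightHalfPlane hv (by simpa [unitDisk] using hz)
  have hfd : DifferentiableOn ℂ f (ball 0 1) :=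
    (differentiableOn_cayleyInv hGv).comp
      (hd.comp ((differentiableOn_cayley v).mono fun z hz => by simpa [unitDisk] using hz) hmaps)
      (hm.comp hmaps)
  have hfm : MapsTo f (ball 0 1) (closedBall 0 1) := fun z hz =>
    ball_subset_closedBall (by simpa [unitDisk] using cayleyInv_mem_unitDisk hGv (hm (hmaps hz)))
  have hf0 : f 0 = 0 := by simp only [f, cayley_zero, cayleyInv_self]
  simpa [f, cayley_cayleyInv hv hw] using
    Complex.norm_le_norm_of_mapsTo_ball hfd hfm hf0 (cayleyInv_mem_unitDisk hv hw)

theorem re_mul_re_div_normSq_le (hd : DifferentiableOn ℂ G rightHalfPlane)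
    (hm : MapsTo G rightHalfPlane rightHalfPlane) {v w : ℂ} (hv : v ∈ rightHalfPlane)
    (hw : w ∈ rightHalfPlane) :
    w.re * v.re / normSq (w + conj v) ≤ (G w).re * (G v).re / normSq (G w + conj (G v)) := by
  have h := pow_le_pow_left₀ (norm_nonneg _) (norm_cayleyInv_le hd hm hv hw) 2
  have h₁ := one_sub_sq_norm_cayleyInv hv hw
  have h₂ := one_sub_sq_norm_cayleyInv (hm hv) (hm hw)
  have h₃ : 4 * w.re * v.re / normSq (w + conj v)
      ≤ 4 * (G w).re * (G v).re / normSq (G w + conj (G v)) := by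
    linarith
  simpa only [mul_assoc, mul_div_assoc, mul_le_mul_iff_right₀ (four_pos : (0:ℝ) < 4)] using h₃

/-- Julia's lemma at the boundary point `∞` with angular derivative `1`. -/
theorem re_le_re_of_tendsto_div (hd : DifferentiableOn ℂ G rightHalfPlane)
    (hm : MapsTo G rightHalfPlane rightHalfPlane)
    (hlim : Tendsto (fun t : ℝ => G t / t) atTop (𝓝 1)) {w : ℂ} (hw : w ∈ rightHalfPlane) :
    w.re ≤ (G w).re := by
  have hineq : ∀ᶠ t : ℝ in atTop, w.re / normSq ((w + t) / t)
      ≤ (G w).re * (G t / t).re / normSq ((G w + conj (G t)) / t) := by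
    filter_upwards [eventually_gt_atTop 0] with t ht
    have h := re_mul_re_div_normSq_le hd hm (ofReal_mem_rightHalfPlane ht) hw
    have h₁ : normSq (w + t) ≠ 0 := by
      simpa [conj_ofReal] using
        normSq_eq_zero.not.2 (add_conj_ne_zero hw (ofReal_mem_rightHalfPlane ht))
    have h₂ : normSq (G w + conj (G t)) ≠ 0 :=
      normSq_eq_zero.not.2 (add_conj_ne_zero (hm hw) (hm (ofReal_mem_rightHalfPlane ht)))
    simp only [conj_ofReal, ofReal_re] at h
    rw [map_div₀, map_div₀, normSq_ofReal, div_ofReal_re]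
    calc w.re / (normSq (w + t) / (t * t)) = t * (w.re * t / normSq (w + t)) := by
          field_simp
      _ ≤ t * ((G w).re * (G t).re / normSq (G w + conj (G t))) := by gcongr
      _ = _ := by field_simp
  have hden₁ : Tendsto (fun t : ℝ => (w + t) / t) atTop (𝓝 1) := by
    have := ((tendsto_const_nhds (x := w)).mul tendsto_ofReal_inv_atTop).add_const 1
    rw [mul_zero, zero_add] at this
    refine this.congr' ?_
    filter_upwards [eventually_gt_atTop 0] with t ht
    field_simp [ofReal_ne_zero.2 ht.ne']
  have hden₂ : Tendsto (fun t : ℝ => (G w + conj (G t)) / t) atTop (𝓝 1) := by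
    have := ((tendsto_const_nhds (x := G w)).mul tendsto_ofReal_inv_atTop).add
      ((continuous_conj.tendsto 1).comp hlim)
    rw [mul_zero, zero_add, map_one] at this
    refine this.congr' ?_
    filter_upwards [eventually_gt_atTop 0] with t ht
    simp only [Function.comp_apply, map_div₀, conj_ofReal]
    field_simp [ofReal_ne_zero.2 ht.ne']
  have hl := (tendsto_const_nhds (x := w.re)).div ((continuous_normSq.tendsto 1).comp hden₁)
    (by simp)
  have hr := ((tendsto_const_nhds (x := (G w).re)).mul ((continuous_re.tendsto 1).comp hlim)).div
    ((continuous_normSq.tendsto 1).comp hden₂) (by simp)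
  simpa using le_of_tendsto_of_tendsto hl hr hineq

theorem norm_le_norm_one_mul (hd : DifferentiableOn ℂ G rightHalfPlane)
    (hm : MapsTo G rightHalfPlane rightHalfPlane) {t : ℝ} (ht : 1 ≤ t) :
    ‖G t‖ ≤ ‖G 1‖ * t := by
  have hSP := norm_cayleyInv_le hd hm one_mem_rightHalfPlane
    (ofReal_mem_rightHalfPlane (by linarith : (0 : ℝ) < t))
  have hden := add_conj_ne_zero (hm (ofReal_mem_rightHalfPlane (by linarith : (0 : ℝ) < t)))
    (hm one_mem_rightHalfPlane)
  rw [cayleyInv_one_ofReal, norm_real, Real.norm_of_nonneg (by apply div_nonneg <;> linarith),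
    cayleyInv, norm_div, div_le_div_iff₀ (norm_pos_iff.2 hden) (by linarith)] at hSP
  have htri₁ : ‖G t + conj (G 1)‖ ≤ ‖G t‖ + ‖G 1‖ := by
    simpa using norm_add_le (G t) (conj (G 1))
  have htri₂ : ‖G t‖ ≤ ‖G t - G 1‖ + ‖G 1‖ := norm_le_norm_sub_add _ _
  nlinarith

theorem norm_one_le_mul_norm (hd : DifferentiableOn ℂ G rightHalfPlane)
    (hm : MapsTo G rightHalfPlane rightHalfPlane) {t : ℝ} (ht : 1 ≤ t) :
    ‖G 1‖ ≤ t * ‖G t‖ := by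
  have hne : ∀ w ∈ rightHalfPlane, G w ≠ 0 := fun w hw h => by
    simpa [rightHalfPlane, h] using hm hw
  have hinv : MapsTo (fun w => (G w)⁻¹) rightHalfPlane rightHalfPlane := fun w hw => by
    show 0 < ((G w)⁻¹).re
    rw [inv_re]
    exact div_pos (hm hw) (normSq_pos.2 (hne w hw))
  have h : ‖(G t)⁻¹‖ ≤ ‖(G 1)⁻¹‖ * t := norm_le_norm_one_mul (hd.inv hne) hinv ht
  have h₁ := norm_pos_iff.2 (hne 1 one_mem_rightHalfPlane)
  have h₂ := norm_pos_iff.2 (hne t (ofReal_mem_rightHalfPlane (by linarith)))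
  rw [norm_inv, norm_inv, inv_le_iff_one_le_mul₀ h₂] at h
  calc ‖G 1‖ = ‖G 1‖ * 1 := (mul_one _).symm
    _ ≤ ‖G 1‖ * (‖G 1‖⁻¹ * t * ‖G t‖) := by gcongr
    _ = t * ‖G t‖ := by field_simp

theorem not_tendsto_mul_nhds_zero (hd : DifferentiableOn ℂ G rightHalfPlane)
    (hm : MapsTo G rightHalfPlane rightHalfPlane) :
    ¬ Tendsto (fun t : ℝ => (t : ℂ) * G t) atTop (𝓝 0) := by
  intro h
  have hbound : ∀ᶠ t : ℝ in atTop, ‖G 1‖ ≤ ‖(t : ℂ) * G t‖ := by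
    filter_upwards [eventually_ge_atTop 1] with t ht
    rw [norm_mul, norm_real, Real.norm_of_nonneg (by linarith)]
    exact norm_one_le_mul_norm hd hm ht
  have h₀ : ‖G 1‖ ≤ 0 := by simpa using ge_of_tendsto h.norm hbound
  have h₁ : 0 < (G 1).re := hm one_mem_rightHalfPlane
  have h₂ : G 1 = 0 := norm_le_zero_iff.1 h₀
  simp [h₂] at h₁

theorem eqOn_id_of_tendsto_mul_sub (hd : DifferentiableOn ℂ G rightHalfPlane)
    (hm : MapsTo G rightHalfPlane rightHalfPlane)
    (hlim : Tendsto (fun t : ℝ => (t : ℂ) * (G t - t)) atTop (𝓝 0)) :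
    EqOn G id rightHalfPlane := by
  have hsub : Tendsto (fun t : ℝ => G t - t) atTop (𝓝 0) := by
    have := tendsto_ofReal_inv_atTop.mul hlim
    rw [zero_mul] at this
    refine this.congr' ?_
    filter_upwards [eventually_gt_atTop 0] with t ht
    field_simp [ofReal_ne_zero.2 ht.ne']
  have hdiv : Tendsto (fun t : ℝ => G t / t) atTop (𝓝 1) := by
    have := (hsub.mul tendsto_ofReal_inv_atTop).const_add 1
    rw [mul_zero, add_zero] at this
    refine this.congr' ?_
    filter_upwards [eventually_gt_atTop 0] with t ht
    field_simp [ofReal_ne_zero.2 ht.ne']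
    ring
  set H := fun w => G w - w
  have hHd : DifferentiableOn ℂ H rightHalfPlane := hd.sub differentiableOn_id
  have hHre : MapsTo H rightHalfPlane {z | 0 ≤ z.re} := fun w hw => by
    simpa [H] using re_le_re_of_tendsto_div hd hm hdiv hw
  rcases (hHd.analyticOnNhd isOpen_rightHalfPlane).is_constant_or_isOpen
    isPreconnected_rightHalfPlane with ⟨c, hc⟩ | hopen
  · have hc₀ : c = 0 := by
      refine tendsto_nhds_unique (tendsto_const_nhds.congr' ?_) hsub
      filter_upwards [eventually_gt_atTop 0] with t ht
      exact (hc t (ofReal_mem_rightHalfPlane ht)).symm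
    intro w hw
    simpa [H, hc₀, sub_eq_zero] using hc w hw
  · have hHm : MapsTo H rightHalfPlane rightHalfPlane := by
      have := (hopen _ subset_rfl isOpen_rightHalfPlane).subset_interior_iff.2
        hHre.image_subset
      rw [interior_setOfPred_le_re] at this
      exact fun w hw => this (mem_image_of_mem H hw)
    exact absurd hlim (not_tendsto_mul_nhds_zero hHd hHm)

end SelfMapsOfRightHalfPlane

lemma tendsto_cayleyInv_one_atTop :
    Tendsto (fun t : ℝ => cayleyInv 1 t) atTop (𝓝[stolzAngle 1 2] 1) := by
  refine tendsto_nhdsWithin_iff.2 ⟨?_, ?_⟩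
  · have := ((tendsto_ofReal_inv_atTop.const_sub 1).div
      (tendsto_ofReal_inv_atTop.const_add 1) (by norm_num))
    rw [sub_zero, add_zero, div_one] at this
    refine this.congr' ?_
    filter_upwards [eventually_gt_atTop 0] with t ht
    have : (t : ℂ) ≠ 0 := ofReal_ne_zero.2 ht.ne'
    have : (t : ℂ) + 1 ≠ 0 := by exact_mod_cast (by linarith : t + 1 ≠ 0)
    simp only [cayleyInv, map_one, Pi.div_apply]
    field_simp
  · filter_upwards [eventually_gt_atTop 1] with t ht
    have hr₀ : 0 ≤ (t - 1) / (t + 1) := div_nonneg (by linarith) (by linarith)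
    have hr₁ : (t - 1) / (t + 1) < 1 := (div_lt_one (by linarith)).2 (by linarith)
    have hnorm : ‖cayleyInv 1 t‖ = (t - 1) / (t + 1) := by
      rw [cayleyInv_one_ofReal, norm_real, Real.norm_of_nonneg hr₀]
    have hnorm₁ : ‖cayleyInv 1 t - 1‖ = 1 - (t - 1) / (t + 1) := by
      rw [cayleyInv_one_ofReal, ← ofReal_one, ← ofReal_sub, norm_real,
        Real.norm_of_nonpos (by linarith), neg_sub]
    refine ⟨show ‖cayleyInv 1 t‖ < 1 by rw [hnorm]; exact hr₁, ?_⟩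
    rw [hnorm, hnorm₁]
    linarith

lemma cayley_one_mul_sub_of_sub_eq {z u ε : ℂ} (hz : 1 - z ≠ 0) (hu : 1 - u ≠ 0)
    (hε : u - z = ε * (z - 1) ^ 3) :
    cayley 1 z * (cayley 1 u - cayley 1 z) = -2 * (1 + z) * ε / (1 + ε * (1 - z) ^ 2) := by
  have hden : 1 + ε * (1 - z) ^ 2 = (1 - u) / (1 - z) := by
    field_simp
    linear_combination hε
  rw [hden]
  simp only [cayley, map_one, one_mul]
  field_simp
  linear_combination 2 * (1 + z) * hε

lemma tendsto_cayley_one_mul_sub {F : ℂ → ℂ} (hF : MapsTo F unitDisk unitDisk)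
    (hC : CA3At1 F 1 1 0 0) :
    Tendsto (fun z => cayley 1 z * (cayley 1 (F z) - cayley 1 z))
      (𝓝[stolzAngle 1 2] 1) (𝓝 0) := by
  set ε := fun z => (F z - z) / (z - 1) ^ 3
  have hε : Tendsto ε (𝓝[stolzAngle 1 2] 1) (𝓝 0) := by
    refine (hC 2 one_lt_two).congr fun z => ?_
    simp only [ε]
    ring_nf
  have hid : Tendsto id (𝓝[stolzAngle 1 2] 1) (𝓝 1) := tendsto_id.mono_left nhdsWithin_le_nhds
  have hden : Tendsto (fun z => 1 + ε z * (1 - z) ^ 2) (𝓝[stolzAngle 1 2] 1) (𝓝 1) := by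
    simpa using (hε.mul ((hid.const_sub 1).pow 2)).const_add 1
  have hlim : Tendsto (fun z => -2 * (1 + z) * ε z / (1 + ε z * (1 - z) ^ 2))
      (𝓝[stolzAngle 1 2] 1) (𝓝 0) := by
    simpa [Pi.div_def] using (((hid.const_add 1).const_mul (-2)).mul hε).div hden one_ne_zero
  refine hlim.congr' ?_
  filter_upwards [self_mem_nhdsWithin] with z hz
  have hz₁ := one_sub_ne_zero_of_mem_unitDisk hz.1
  have hz₁' : (z - 1) ^ 3 ≠ 0 := pow_ne_zero 3 fun h => hz₁ (by linear_combination -h)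
  exact (cayley_one_mul_sub_of_sub_eq hz₁ (one_sub_ne_zero_of_mem_unitDisk (hF hz.1))
    (div_mul_cancel₀ _ hz₁').symm).symm

/-- Burns–Krantz rigidity theorem: a holomorphic self-map of the disk of class `C_A^3(1)`
with `F(1) = 1`, `F'(1) = 1`, `F''(1) = 0`, `F'''(1) = 0` is the identity. -/
theorem stmt0 (F : ℂ → ℂ) (hF : HolSelfMap F)
    (hC : CA3At1 F 1 1 0 0) :
    ∀ z ∈ unitDisk, F z = z := by
  set G := fun w => cayley 1 (F (cayleyInv 1 w))
  have hinv : MapsTo (cayleyInv 1) rightHalfPlane unitDisk := fun w hw =>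
    cayleyInv_mem_unitDisk one_mem_rightHalfPlane hw
  have hGd : DifferentiableOn ℂ G rightHalfPlane :=
    (differentiableOn_cayley 1).comp
      (hF.1.comp (differentiableOn_cayleyInv one_mem_rightHalfPlane) hinv) (hF.2.comp hinv)
  have hGm : MapsTo G rightHalfPlane rightHalfPlane := fun w hw =>
    cayley_mem_rightHalfPlane one_mem_rightHalfPlane (hF.2 (hinv hw))
  have hlim : Tendsto (fun t : ℝ => (t : ℂ) * (G t - t)) atTop (𝓝 0) := by
    refine ((tendsto_cayley_one_mul_sub hF.2 hC).comp tendsto_cayleyInv_one_atTop).congr' ?_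
    filter_upwards [eventually_gt_atTop 0] with t ht
    simp only [Function.comp_apply, G, cayley_cayleyInv one_mem_rightHalfPlane
      (ofReal_mem_rightHalfPlane ht)]
  have hG := eqOn_id_of_tendsto_mul_sub hGd hGm hlim
  intro z hz
  calc F z = cayleyInv 1 (G (cayley 1 z)) := by
        simp only [G, cayleyInv_cayley one_mem_rightHalfPlane hz,
          cayleyInv_cayley one_mem_rightHalfPlane (hF.2 hz)]
    _ = z := by
        rw [hG (cayley_mem_rightHalfPlane one_mem_rightHalfPlane hz), id,
          cayleyInv_cayley one_mem_rightHalfPlane hz]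
end
end

section
/- Let f ∈ G(Δ) and let S = {F_t}_{t≥0} be the one-parameter continuous semigroup of holomorphic self-mappings of Δ generated by f. Then every F_t (t ≥ 0) is a linear fractional transformation if and only if f is a polynomial of degree at most 2. -/
open Complex Filter Set Metric ComplexConjugate

noncomputable section

/-!
Both directions go through the cross-ratio. Linear fractional maps preserve cross-ratios, so if
every `F_t` is one, the cross-ratio of the orbits of `z, 0, 1/2, -1/2` is constant in `t`, and
differentiating at `t = 0` expresses `f z` as the quadratic interpolating `f` at `0, ±1/2`.
Conversely, for `f w = a w² + b w + c` two orbits `u, v` satisfy the linear equation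
`(u - v)' = -(a (u + v) + b) (u - v)`. Hence both products of differences in a cross-ratio equal
`exp (∫ μ)` times their initial values, with the same `μ`: each `F_t` is injective and preserves
cross-ratios, so it is the linear fractional map determined by its values at three points.
-/

open Topology

theorem eq_exp_integral_mul_of_hasDerivWithinAt {μ y : ℝ → ℂ} {a b : ℝ} (hab : a ≤ b)
    (hμ : ContinuousOn μ (Icc a b)) (hy : ContinuousOn y (Icc a b))
    (hy' : ∀ t ∈ Ico a b, HasDerivWithinAt y (μ t * y t) (Ici t) t) :
    y b = exp (∫ s in a..b, μ s) * y a := by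
  set I : ℝ → ℂ := fun t => ∫ s in a..t, μ s
  have hI : ContinuousOn I (Icc a b) := by
    have := intervalIntegral.continuousOn_primitive_interval (μ := MeasureTheory.volume)
      (a := a) (b := b) (by rw [uIcc_of_le hab]; exact hμ.integrableOn_Icc)
    rwa [uIcc_of_le hab] at this
  have hI' : ∀ t ∈ Ico a b, HasDerivWithinAt I (μ t) (Ici t) t := by
    intro t ht
    have hmem : Icc a b ∈ 𝓝[>] t := Icc_mem_nhdsGT_of_mem ht
    exact intervalIntegral.integral_hasDerivWithinAt_right
      ((hμ.mono (uIcc_subset_Icc (left_mem_Icc.2 hab) (Ico_subset_Icc_self ht))).intervalIntegrable)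
      ⟨Icc a b, hmem, hμ.aestronglyMeasurable measurableSet_Icc⟩
      ((hμ t (Ico_subset_Icc_self ht)).mono_of_mem_nhdsWithin hmem)
  have hconst := constant_of_has_deriv_right_zero (f := fun t => exp (-I t) * y t)
    (hI.neg.cexp.mul hy) (fun t ht => ((hI' t ht).neg.cexp.mul (hy' t ht)).congr_deriv (by ring))
    b (right_mem_Icc.2 hab)
  simp only [I, intervalIntegral.integral_same, neg_zero, exp_zero, one_mul] at hconst
  rw [← hconst, ← mul_assoc, ← exp_add, add_neg_cancel, exp_zero, one_mul]

theorem unitDisk_eq_ball : unitDisk = ball (0 : ℂ) 1 := by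
  ext z
  simp [unitDisk]

theorem HolSelfMap.dist_le {F : ℂ → ℂ} (hF : HolSelfMap F) {z w : ℂ} (hz : z ∈ unitDisk)
    (hw : w ∈ ball z (1 - ‖z‖)) : dist (F w) (F z) ≤ 2 / (1 - ‖z‖) * dist w z := by
  have hball : ball z (1 - ‖z‖) ⊆ unitDisk := by
    rw [unitDisk_eq_ball]
    exact ball_subset_ball' (by simp)
  refine Complex.dist_le_div_mul_dist_of_mapsTo_ball (hF.1.mono hball) (fun u hu => ?_) hw
  have hu : ‖F u‖ < 1 := hF.2 (hball hu)
  have hz : ‖F z‖ < 1 := hF.2 hz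
  rw [mem_closedBall, dist_eq_norm]
  linarith [norm_sub_le (F u) (F z)]

theorem IsLFTOn.exists_denom_ne_zero {F : ℂ → ℂ} (hmaps : MapsTo F unitDisk unitDisk)
    (hF : IsLFTOn F) : ∃ a b c d : ℂ, a * d - b * c ≠ 0 ∧
      ∀ z ∈ unitDisk, c * z + d ≠ 0 ∧ F z = (a * z + b) / (c * z + d) := by
  obtain ⟨a, b, c, d, hdet, hF⟩ := hF
  refine ⟨a, b, c, d, hdet, fun z hz => ⟨fun hpole => ?_, hF z hz⟩⟩
  have hc : c ≠ 0 := by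
    rintro rfl
    exact hdet (by linear_combination a * hpole)
  have hnum : a * z + b ≠ 0 := fun h => hdet (by linear_combination a * hpole - c * h)
  -- `|F| < 1` near a pole would force the numerator to vanish there as well
  have hle : ∀ᶠ w in 𝓝[≠] z, ‖a * w + b‖ ≤ ‖c * w + d‖ := by
    have hdisk : unitDisk ∈ 𝓝 z := by
      rw [unitDisk_eq_ball] at hz ⊢
      exact isOpen_ball.mem_nhds hz
    filter_upwards [nhdsWithin_le_nhds hdisk, self_mem_nhdsWithin] with w hw hwz
    have hden : c * w + d ≠ 0 := by
      rw [show c * w + d = c * (w - z) by linear_combination hpole]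
      exact mul_ne_zero hc (sub_ne_zero.2 hwz)
    have hFw : ‖F w‖ < 1 := hmaps hw
    rw [hF w hw, norm_div, div_lt_one (norm_pos_iff.2 hden)] at hFw
    exact hFw.le
  have hlim : ‖a * z + b‖ ≤ ‖c * z + d‖ :=
    le_of_tendsto_of_tendsto
      ((by fun_prop : Continuous fun w => ‖a * w + b‖).tendsto z |>.mono_left nhdsWithin_le_nhds)
      ((by fun_prop : Continuous fun w => ‖c * w + d‖).tendsto z |>.mono_left nhdsWithin_le_nhds)
      hle
  rw [hpole, norm_zero] at hlim
  exact hnum (norm_le_zero_iff.1 hlim)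

/-- `crossRatio (F z₁) (F z₂) (F z₃) (F z₄) = crossRatio z₁ z₂ z₃ z₄`, with the denominators
cleared. -/
def PreservesCrossRatio (F : ℂ → ℂ) (z₁ z₂ z₃ z₄ : ℂ) : Prop :=
  (F z₁ - F z₃) * (F z₂ - F z₄) * ((z₁ - z₄) * (z₂ - z₃)) =
    (F z₁ - F z₄) * (F z₂ - F z₃) * ((z₁ - z₃) * (z₂ - z₄))

theorem IsLFTOn.preservesCrossRatio {F : ℂ → ℂ} (hmaps : MapsTo F unitDisk unitDisk)
    (hF : IsLFTOn F) {z₁ z₂ z₃ z₄ : ℂ} (h₁ : z₁ ∈ unitDisk) (h₂ : z₂ ∈ unitDisk)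
    (h₃ : z₃ ∈ unitDisk) (h₄ : z₄ ∈ unitDisk) : PreservesCrossRatio F z₁ z₂ z₃ z₄ := by
  obtain ⟨a, b, c, d, -, hF⟩ := hF.exists_denom_ne_zero hmaps
  have hsub : ∀ u ∈ unitDisk, ∀ v ∈ unitDisk,
      F u - F v = (a * d - b * c) * (u - v) / ((c * u + d) * (c * v + d)) := by
    intro u hu v hv
    rw [(hF u hu).2, (hF v hv).2, div_sub_div _ _ (hF u hu).1 (hF v hv).1]
    ring
  have hd₁ := (hF z₁ h₁).1
  have hd₂ := (hF z₂ h₂).1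
  have hd₃ := (hF z₃ h₃).1
  have hd₄ := (hF z₄ h₄).1
  rw [PreservesCrossRatio, hsub z₁ h₁ z₃ h₃, hsub z₂ h₂ z₄ h₄, hsub z₁ h₁ z₄ h₄, hsub z₂ h₂ z₃ h₃]
  field_simp

theorem isLFTOn_of_preservesCrossRatio {F : ℂ → ℂ} {p q r : ℂ} (hpq : p ≠ q) (hpr : p ≠ r)
    (hqr : q ≠ r) (hFpq : F p ≠ F q) (hFpr : F p ≠ F r) (hFqr : F q ≠ F r)
    (hF : ∀ z ∈ unitDisk, PreservesCrossRatio F z p q r) : IsLFTOn F := by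
  unfold PreservesCrossRatio at hF
  set A := (F p - F r) * (p - q)
  set B := (F p - F q) * (p - r)
  have hdet :
      (F q * A - F r * B) * (B * q - A * r) - (F r * B * q - F q * A * r) * (A - B) ≠ 0 := by
    rw [show (F q * A - F r * B) * (B * q - A * r) - (F r * B * q - F q * A * r) * (A - B) =
      A * B * (F q - F r) * (q - r) by ring]
    simp only [A, B, mul_ne_zero_iff, sub_ne_zero]
    tauto
  refine ⟨F q * A - F r * B, F r * B * q - F q * A * r, A - B, B * q - A * r, hdet, fun z hz => ?_⟩
  have hrel : F z * ((A - B) * z + (B * q - A * r)) =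
      (F q * A - F r * B) * z + (F r * B * q - F q * A * r) := by
    linear_combination hF z hz
  have hden : (A - B) * z + (B * q - A * r) ≠ 0 := by
    intro hden
    have hnum : (F q * A - F r * B) * z + (F r * B * q - F q * A * r) = 0 := by
      rw [← hrel, hden, mul_zero]
    exact hdet (by linear_combination (F q * A - F r * B) * hden - (A - B) * hnum)
  exact (eq_div_iff hden).2 hrel

namespace Generates

variable {f : ℂ → ℂ} {S : ℝ → ℂ → ℂ} (hS : Generates f S)
include hS

theorem mapsTo {t : ℝ} (ht : 0 ≤ t) : MapsTo (S t) unitDisk unitDisk :=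
  (hS.1.1 t ht).2

theorem apply_zero {z : ℂ} (hz : z ∈ unitDisk) : S 0 z = z := by
  have hlim : Tendsto (fun t => S t (S 0 z)) (𝓝[>] 0) (𝓝 z) := by
    refine (hS.1.2.2 z hz).congr' ?_
    filter_upwards [self_mem_nhdsWithin] with t ht
    simpa using hS.1.2.1 t (le_of_lt ht) 0 le_rfl z hz
  exact tendsto_nhds_unique (hS.1.2.2 _ (hS.mapsTo le_rfl hz)) hlim

theorem hasDerivWithinAt {z : ℂ} (hz : z ∈ unitDisk) {t : ℝ} (ht : 0 ≤ t) :
    HasDerivWithinAt (fun s => S s z) (-f (S t z)) (Ici t) t := by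
  set w := S t z
  have hshift : Tendsto (fun s => s - t) (𝓝[>] t) (𝓝[>] 0) :=
    tendsto_nhdsWithin_iff.2 ⟨tendsto_sub_nhds_zero_iff.2 nhdsWithin_le_nhds,
      eventually_nhdsWithin_of_forall fun s hs => mem_Ioi.2 (sub_pos.2 hs)⟩
  rw [← hasDerivWithinAt_Ioi_iff_Ici, hasDerivWithinAt_iff_tendsto_slope' self_notMem_Ioi]
  refine ((hS.2 w (hS.mapsTo ht hz)).neg.comp hshift).congr' ?_
  filter_upwards [self_mem_nhdsWithin] with s hs
  have hsw : S s z = S (s - t) w := by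
    rw [← hS.1.2.1 (s - t) (sub_nonneg.2 (le_of_lt hs)) t ht z hz, sub_add_cancel]
  have hst : ((s - t : ℝ) : ℂ) ≠ 0 := ofReal_ne_zero.2 (sub_ne_zero.2 (ne_of_gt hs))
  simp only [Function.comp_apply, slope_def_module, hsw, real_smul, ofReal_inv]
  field_simp
  ring

theorem continuousOn {z : ℂ} (hz : z ∈ unitDisk) : ContinuousOn (fun t => S t z) (Ici 0) := by
  intro t₀ ht₀
  suffices hleft : ContinuousWithinAt (fun t => S t z) (Icc 0 t₀) t₀ from
    (hleft.union (hS.hasDerivWithinAt hz ht₀).continuousWithinAt).mono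
      fun t ht => (le_total t t₀).imp (fun h => ⟨ht, h⟩) id
  rw [← Ico_insert_right ht₀, continuousWithinAt_insert_self, ContinuousWithinAt,
    tendsto_iff_dist_tendsto_zero]
  have hshift : Tendsto (fun s => t₀ - s) (𝓝[Ico 0 t₀] t₀) (𝓝[>] 0) :=
    tendsto_nhdsWithin_iff.2
      ⟨((continuous_sub_left t₀).tendsto' t₀ 0 (sub_self t₀)).mono_left nhdsWithin_le_nhds,
        eventually_nhdsWithin_of_forall fun s hs => mem_Ioi.2 (sub_pos.2 hs.2)⟩
  have hnear : Tendsto (fun s => S (t₀ - s) z) (𝓝[Ico 0 t₀] t₀) (𝓝 z) :=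
    (hS.1.2.2 z hz).comp hshift
  have hball : ∀ᶠ s in 𝓝[Ico 0 t₀] t₀, S (t₀ - s) z ∈ ball z (1 - ‖z‖) :=
    hnear (ball_mem_nhds z (sub_pos.2 hz))
  -- `S t₀ = S s ∘ S (t₀ - s)`, and the maps `S s` are uniformly Lipschitz near `z`
  refine squeeze_zero' (Eventually.of_forall fun _ => dist_nonneg) ?_
    (by simpa using (tendsto_iff_dist_tendsto_zero.1 hnear).const_mul (2 / (1 - ‖z‖)))
  filter_upwards [hball, self_mem_nhdsWithin] with s hs hs₀
  calc dist (S s z) (S t₀ z) = dist (S s (S (t₀ - s) z)) (S s z) := by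
        rw [← hS.1.2.1 s hs₀.1 (t₀ - s) (sub_nonneg.2 hs₀.2.le) z hz, add_sub_cancel, dist_comm]
    _ ≤ 2 / (1 - ‖z‖) * dist (S (t₀ - s) z) z := (hS.1.1 s hs₀.1).dist_le hz hs

section Quadratic

variable {a b c : ℂ} (hquad : ∀ w ∈ unitDisk, f w = a * w ^ 2 + b * w + c)
include hquad

theorem hasDerivWithinAt_sub_of_quadratic {z w : ℂ} (hz : z ∈ unitDisk) (hw : w ∈ unitDisk)
    {t : ℝ} (ht : 0 ≤ t) :
    HasDerivWithinAt (fun s => S s z - S s w) (-(a * (S t z + S t w) + b) * (S t z - S t w))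
      (Ici t) t := by
  refine ((hS.hasDerivWithinAt hz ht).sub (hS.hasDerivWithinAt hw ht)).congr_deriv ?_
  rw [hquad _ (hS.mapsTo ht hz), hquad _ (hS.mapsTo ht hw)]
  ring

theorem sub_mul_sub_eq_of_quadratic {z₁ z₂ z₃ z₄ : ℂ} (h₁ : z₁ ∈ unitDisk) (h₂ : z₂ ∈ unitDisk)
    (h₃ : z₃ ∈ unitDisk) (h₄ : z₄ ∈ unitDisk) {T : ℝ} (hT : 0 ≤ T) :
    (S T z₁ - S T z₃) * (S T z₂ - S T z₄) =
      exp (∫ t in 0..T, -(a * (S t z₁ + S t z₂ + (S t z₃ + S t z₄)) + 2 * b)) *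
        ((z₁ - z₃) * (z₂ - z₄)) := by
  have c₁ := (hS.continuousOn h₁).mono (Icc_subset_Ici_self : Icc 0 T ⊆ Ici 0)
  have c₂ := (hS.continuousOn h₂).mono (Icc_subset_Ici_self : Icc 0 T ⊆ Ici 0)
  have c₃ := (hS.continuousOn h₃).mono (Icc_subset_Ici_self : Icc 0 T ⊆ Ici 0)
  have c₄ := (hS.continuousOn h₄).mono (Icc_subset_Ici_self : Icc 0 T ⊆ Ici 0)
  have := eq_exp_integral_mul_of_hasDerivWithinAt
    (μ := fun t => -(a * (S t z₁ + S t z₂ + (S t z₃ + S t z₄)) + 2 * b))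
    (y := fun t => (S t z₁ - S t z₃) * (S t z₂ - S t z₄)) hT (by fun_prop) (by fun_prop)
    fun t ht => ((hS.hasDerivWithinAt_sub_of_quadratic hquad h₁ h₃ ht.1).mul
      (hS.hasDerivWithinAt_sub_of_quadratic hquad h₂ h₄ ht.1)).congr_deriv (by ring)
  simpa only [hS.apply_zero h₁, hS.apply_zero h₂, hS.apply_zero h₃, hS.apply_zero h₄] using this

theorem injOn_of_quadratic {T : ℝ} (hT : 0 ≤ T) : InjOn (S T) unitDisk := by
  intro z hz w hw hzw
  have := hS.sub_mul_sub_eq_of_quadratic hquad hz hz hw hw hT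
  rw [hzw, sub_self, zero_mul, eq_comm] at this
  simpa [exp_ne_zero, sub_eq_zero] using this

theorem preservesCrossRatio_of_quadratic {z₁ z₂ z₃ z₄ : ℂ} (h₁ : z₁ ∈ unitDisk)
    (h₂ : z₂ ∈ unitDisk) (h₃ : z₃ ∈ unitDisk) (h₄ : z₄ ∈ unitDisk) {T : ℝ} (hT : 0 ≤ T) :
    PreservesCrossRatio (S T) z₁ z₂ z₃ z₄ := by
  have h₃₄ := hS.sub_mul_sub_eq_of_quadratic hquad h₁ h₂ h₃ h₄ hT
  have h₄₃ := hS.sub_mul_sub_eq_of_quadratic hquad h₁ h₂ h₄ h₃ hT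
  simp only [add_comm (S _ z₄)] at h₄₃
  rw [PreservesCrossRatio, h₃₄, h₄₃]
  ring

theorem isLFTOn_of_quadratic {T : ℝ} (hT : 0 ≤ T) : IsLFTOn (S T) := by
  have h₀ : (0 : ℂ) ∈ unitDisk := by norm_num [unitDisk]
  have h₁ : (1 / 2 : ℂ) ∈ unitDisk := by norm_num [unitDisk]
  have h₂ : (-1 / 2 : ℂ) ∈ unitDisk := by norm_num [unitDisk]
  have hinj := hS.injOn_of_quadratic hquad hT
  exact isLFTOn_of_preservesCrossRatio (by norm_num) (by norm_num) (by norm_num)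
    (hinj.ne h₀ h₁ (by norm_num)) (hinj.ne h₀ h₂ (by norm_num)) (hinj.ne h₁ h₂ (by norm_num))
    fun z hz => hS.preservesCrossRatio_of_quadratic hquad hz h₀ h₁ h₂ hT

end Quadratic

theorem eq_quadratic_of_isLFTOn (hLFT : ∀ t, 0 ≤ t → IsLFTOn (S t)) {z : ℂ} (hz : z ∈ unitDisk) :
    f z = (-4 * f 0 + 2 * f (1 / 2) + 2 * f (-1 / 2)) * z ^ 2 + (f (1 / 2) - f (-1 / 2)) * z
      + f 0 := by
  have h₀ : (0 : ℂ) ∈ unitDisk := by norm_num [unitDisk]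
  have h₁ : (1 / 2 : ℂ) ∈ unitDisk := by norm_num [unitDisk]
  have h₂ : (-1 / 2 : ℂ) ∈ unitDisk := by norm_num [unitDisk]
  have hd : ∀ {w}, w ∈ unitDisk → HasDerivWithinAt (fun t => S t w) (-f w) (Ici 0) 0 :=
    fun hw => by simpa only [hS.apply_zero hw] using hS.hasDerivWithinAt hw le_rfl
  -- the cross-ratio of the orbits of `z, 0, 1/2, -1/2` is constant, so its derivative vanishes
  set H : ℝ → ℂ := fun t => (S t z - S t (1 / 2)) * (S t 0 - S t (-1 / 2)) *
      ((z - -1 / 2) * (0 - 1 / 2)) -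
    (S t z - S t (-1 / 2)) * (S t 0 - S t (1 / 2)) * ((z - 1 / 2) * (0 - -1 / 2))
  have hH : ∀ t ∈ Ici 0, H t = 0 := fun t ht =>
    sub_eq_zero.2 ((hLFT t ht).preservesCrossRatio (hS.mapsTo ht) hz h₀ h₁ h₂)
  have hH' := ((((hd hz).sub (hd h₁)).mul ((hd h₀).sub (hd h₂))).mul_const
      ((z - -1 / 2) * (0 - 1 / 2))).sub
    ((((hd hz).sub (hd h₂)).mul ((hd h₀).sub (hd h₁))).mul_const ((z - 1 / 2) * (0 - -1 / 2)))
  have := (uniqueDiffWithinAt_Ici 0).eq_deriv _ hH'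
    ((hasDerivWithinAt_const 0 _ 0).congr (fun t ht => hH t ht) (hH 0 self_mem_Ici))
  simp only [Pi.sub_apply, hS.apply_zero hz, hS.apply_zero h₀, hS.apply_zero h₁,
    hS.apply_zero h₂] at this
  linear_combination 4 * this

end Generates

theorem stmt17_general (f : ℂ → ℂ)
    (S : ℝ → ℂ → ℂ) (hS : Generates f S) :
    (∀ t : ℝ, 0 ≤ t → IsLFTOn (S t)) ↔
      ∃ a b c : ℂ, ∀ z ∈ unitDisk, f z = a * z ^ 2 + b * z + c :=
  ⟨fun hLFT => ⟨_, _, _, fun _ => hS.eq_quadratic_of_isLFTOn hLFT⟩,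
    fun ⟨_, _, _, hquad⟩ _ => hS.isLFTOn_of_quadratic hquad⟩

theorem stmt17 (f : ℂ → ℂ) (hf : IsGenerator f)
    (S : ℝ → ℂ → ℂ) (hS : Generates f S) :
    (∀ t : ℝ, 0 ≤ t → IsLFTOn (S t)) ↔
      ∃ a b c : ℂ, ∀ z ∈ unitDisk, f z = a * z ^ 2 + b * z + c :=
  stmt17_general f S hS
end
end
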